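/- Let N ∈ ℕ, let Lᵅⱼ : ℝᴺ → ℝ be twice continuously differentiable for α ∈ {0,1} and j ∈ {1,…,N}, let H : ℝᴺ → ℝ be twice continuously differentiable, set Kᵅᵢⱼ = ∂Lᵅⱼ/∂zⁱ − ∂Lᵅᵢ/∂zʲ, and let z : ℝ² → ℝᴺ be any three times continuously differentiable map (not assumed to solve the system). Define G_β = Σ_α ∂/∂xᵅ [ Σ_j Lᵅⱼ(z)·∂zʲ/∂xᵝ − δᵅ_β·L̃ ] with L̃ = Σ_{α,j} Lᵅⱼ(z)·∂zʲ/∂xᵅ − H(z), and Fᵅ_γβ = Σ_{i,j} Kᵅᵢⱼ(z)·(∂zⁱ/∂xᵞ)·(∂zʲ/∂xᵝ). Then the identity ∂G₁/∂x⁰ − ∂G₀/∂x¹ = Σ_α ∂Fᵅ₀₁/∂xᵅ holds at every point of ℝ². -/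

import Mathlib

/-!
Write `Aᵅ_β = Σⱼ Lᵅⱼ(z) ∂_β zʲ` for the components of the pulled-back one-form `z*ωᵅ`. Then
`G_β = Σ_α ∂_α Aᵅ_β - ∂_β L̃`, and since pullback commutes with the exterior derivative,
`Fᵅ₀₁ = ∂₀Aᵅ₁ - ∂₁Aᵅ₀`. Both sides of the identity are therefore `Σ_α (∂₀∂_α Aᵅ₁ - ∂₁∂_α Aᵅ₀)`
by the symmetry of second derivatives, which also makes the `L̃` terms cancel.
-/

open Finset

section SecondDerivatives

variable {E F : Type*} [NormedAddCommGroup E] [NormedSpace ℝ E]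
  [NormedAddCommGroup F] [NormedSpace ℝ F] {f : E → F}

theorem ContDiff.differentiable_fderiv_apply (hf : ContDiff ℝ 2 f) (v : E) :
    Differentiable ℝ fun p => fderiv ℝ f p v :=
  ((hf.fderiv_right (m := 1) le_rfl).clm_apply contDiff_const).differentiable one_ne_zero

theorem fderiv_fderiv_apply {q : E} (hf : DifferentiableAt ℝ (fderiv ℝ f) q) (v w : E) :
    fderiv ℝ (fun p => fderiv ℝ f p v) q w = fderiv ℝ (fderiv ℝ f) q w v := by
  rw [fderiv_clm_apply hf (differentiableAt_const v)]
  simp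

theorem ContDiff.fderiv_fderiv_apply_comm (hf : ContDiff ℝ 2 f) (q v w : E) :
    fderiv ℝ (fun p => fderiv ℝ f p v) q w = fderiv ℝ (fun p => fderiv ℝ f p w) q v := by
  have hd : DifferentiableAt ℝ (fderiv ℝ f) q :=
    (hf.fderiv_right (m := 1) le_rfl).differentiable one_ne_zero q
  rw [fderiv_fderiv_apply hd, fderiv_fderiv_apply hd]
  exact hf.contDiffAt.isSymmSndFDerivAt (by simp [minSmoothness_of_isRCLikeNormedField]) w v

end SecondDerivatives

section Curl

variable {E F ι : Type*} [NormedAddCommGroup E] [NormedSpace ℝ E]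
  [NormedAddCommGroup F] [NormedSpace ℝ F] [Fintype ι] [DecidableEq ι]

theorem sum_fderiv_sub_ite {B : ι → E → F} {S : E → F} {q : E}
    (hB : ∀ α, DifferentiableAt ℝ (B α) q) (hS : DifferentiableAt ℝ S q) (e : ι → E) (β : ι) :
    ∑ α, fderiv ℝ (fun p => B α p - if α = β then S p else 0) q (e α)
      = ∑ α, fderiv ℝ (B α) q (e α) - fderiv ℝ S q (e β) := by
  have h : ∀ α, fderiv ℝ (fun p => B α p - if α = β then S p else 0) q (e α)
      = fderiv ℝ (B α) q (e α) - if α = β then fderiv ℝ S q (e α) else 0 := by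
    intro α
    by_cases hαβ : α = β
    · subst hαβ
      simp [fderiv_fun_sub (hB α) hS]
    · simp [hαβ]
  simp only [h, sum_sub_distrib, sum_ite_eq', mem_univ, if_true]

theorem curl_divergence_eq_divergence_curl {B : ι → ι → E → F} {S : E → F}
    (hB : ∀ α β, ContDiff ℝ 2 (B α β)) (hS : ContDiff ℝ 2 S) (e : ι → E) {G : ι → E → F}
    (hG : ∀ β p, G β p = ∑ α, fderiv ℝ (fun p' => B α β p' - if α = β then S p' else 0) p (e α))
    (β γ : ι) (q : E) :
    fderiv ℝ (G β) q (e γ) - fderiv ℝ (G γ) q (e β)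
      = ∑ α, fderiv ℝ (fun p => fderiv ℝ (B α β) p (e γ) - fderiv ℝ (B α γ) p (e β)) q (e α) := by
  have hd : ∀ {f : E → F}, ContDiff ℝ 2 f → Differentiable ℝ f := fun hf =>
    hf.differentiable two_ne_zero
  have hG' : ∀ β, G β = fun p => ∑ α, fderiv ℝ (B α β) p (e α) - fderiv ℝ S p (e β) := fun β =>
    funext fun p => (hG β p).trans (sum_fderiv_sub_ite (fun α => hd (hB α β) p) (hd hS p) e β)
  have hdiv : ∀ β v, fderiv ℝ (G β) q v
      = ∑ α, fderiv ℝ (fun p => fderiv ℝ (B α β) p (e α)) q v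
        - fderiv ℝ (fun p => fderiv ℝ S p (e β)) q v := by
    intro β v
    have hBd : ∀ α ∈ univ, DifferentiableAt ℝ (fun p => fderiv ℝ (B α β) p (e α)) q :=
      fun α _ => (hB α β).differentiable_fderiv_apply _ q
    rw [hG', fderiv_fun_sub (DifferentiableAt.fun_sum hBd) (hS.differentiable_fderiv_apply _ q),
      fderiv_fun_sum hBd]
    simp only [sub_apply, _root_.sum_apply]
  simp only [hdiv, fderiv_fun_sub ((hB _ _).differentiable_fderiv_apply _ q)
    ((hB _ _).differentiable_fderiv_apply _ q), sub_apply, sum_sub_distrib,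
    (hB _ _).fderiv_fderiv_apply_comm q (e _) (e γ),
    (hB _ _).fderiv_fderiv_apply_comm q (e _) (e β),
    hS.fderiv_fderiv_apply_comm q (e β) (e γ)]
  abel

end Curl

theorem ContinuousLinearMap.apply_eq_sum_mul_single {κ : Type*} [Fintype κ] [DecidableEq κ]
    (φ : (κ → ℝ) →L[ℝ] ℝ) (w : κ → ℝ) : φ w = ∑ i, w i * φ (Pi.single i 1) := by
  conv_lhs => rw [← Finset.univ_sum_single w, map_sum]
  refine Finset.sum_congr rfl fun i _ => ?_
  rw [← smul_eq_mul, ← map_smul, ← Pi.single_smul', smul_eq_mul, mul_one]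

section Pullback

variable {E κ : Type*} [NormedAddCommGroup E] [NormedSpace ℝ E] [Fintype κ]

noncomputable def oneFormPullback (L : κ → (κ → ℝ) → ℝ) (z : E → κ → ℝ) (v q : E) : ℝ :=
  ∑ j, L j (z q) * fderiv ℝ z q v j

variable {L : κ → (κ → ℝ) → ℝ} {z : E → κ → ℝ}

theorem ContDiff.oneFormPullback {n : WithTop ℕ∞} (hL : ∀ j, ContDiff ℝ n (L j))
    (hz : ContDiff ℝ (n + 1) z) (v : E) : ContDiff ℝ n (oneFormPullback L z v) :=
  ContDiff.sum fun j _ => ((hL j).comp (hz.of_le le_self_add)).mul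
    (contDiff_pi.1 ((hz.fderiv_right le_rfl).clm_apply contDiff_const) j)

theorem fderiv_oneFormPullback_apply {q : E} (hL : ∀ j, DifferentiableAt ℝ (L j) (z q))
    (hz : DifferentiableAt ℝ z q) (hz' : DifferentiableAt ℝ (fderiv ℝ z) q) (u v : E) :
    fderiv ℝ (oneFormPullback L z v) q u
      = ∑ j, (fderiv ℝ (L j) (z q) (fderiv ℝ z q u) * fderiv ℝ z q v j
          + L j (z q) * fderiv ℝ (fderiv ℝ z) q u v j) := by
  have hLz : ∀ j, DifferentiableAt ℝ (fun p => L j (z p)) q := fun j => (hL j).comp q hz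
  have hzv : DifferentiableAt ℝ (fun p => fderiv ℝ z p v) q :=
    hz'.clm_apply (differentiableAt_const v)
  have hzvj : ∀ j, DifferentiableAt ℝ (fun p => fderiv ℝ z p v j) q := fun j =>
    differentiableAt_pi.1 hzv j
  unfold oneFormPullback
  rw [fderiv_fun_sum fun j _ => (hLz j).fun_mul (hzvj j), _root_.sum_apply]
  refine Finset.sum_congr rfl fun j _ => ?_
  rw [fderiv_fun_mul (hLz j) (hzvj j), fderiv_apply hzv, fderiv_fun_comp q (hL j) hz]
  simp only [add_apply, smul_apply, ContinuousLinearMap.comp_apply, fderiv_fderiv_apply hz',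
    ContinuousLinearMap.proj_apply, smul_eq_mul]
  ring

theorem fderiv_oneFormPullback_sub [DecidableEq κ] {q : E}
    (hL : ∀ j, DifferentiableAt ℝ (L j) (z q)) (hz : ContDiff ℝ 2 z) (u v : E) :
    fderiv ℝ (oneFormPullback L z v) q u - fderiv ℝ (oneFormPullback L z u) q v
      = ∑ i, ∑ j, (fderiv ℝ (L j) (z q) (Pi.single i 1) - fderiv ℝ (L i) (z q) (Pi.single j 1))
          * fderiv ℝ z q u i * fderiv ℝ z q v j := by
  have hzd : DifferentiableAt ℝ z q := hz.differentiable two_ne_zero q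
  have hz'd : DifferentiableAt ℝ (fderiv ℝ z) q :=
    (hz.fderiv_right (m := 1) le_rfl).differentiable one_ne_zero q
  have hsymm : fderiv ℝ (fderiv ℝ z) q u v = fderiv ℝ (fderiv ℝ z) q v u :=
    hz.contDiffAt.isSymmSndFDerivAt (by simp [minSmoothness_of_isRCLikeNormedField]) u v
  calc _ = ∑ j, fderiv ℝ (L j) (z q) (fderiv ℝ z q u) * fderiv ℝ z q v j
        - ∑ j, fderiv ℝ (L j) (z q) (fderiv ℝ z q v) * fderiv ℝ z q u j := by
        rw [fderiv_oneFormPullback_apply hL hzd hz'd, fderiv_oneFormPullback_apply hL hzd hz'd,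
          hsymm, sum_add_distrib, sum_add_distrib, add_sub_add_right_eq_sub]
    _ = _ := by
        have hexp := fun j =>
          ContinuousLinearMap.apply_eq_sum_mul_single (fderiv ℝ (L j) (z q))
        simp only [hexp _ (fderiv ℝ z q u), hexp _ (fderiv ℝ z q v), sum_mul, sub_mul,
          sum_sub_distrib]
        rw [sum_comm]
        congr 1 <;> exact sum_congr rfl fun i _ => sum_congr rfl fun j _ => by ring

end Pullback

/-- For an arbitrary (not necessarily solution) `C³` map `z`, the pullback
expressions `G_β` and the symplecticity fluxes `Fᵅ₀₁` satisfy the identity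
`∂G₁/∂x⁰ - ∂G₀/∂x¹ = Σ_α ∂Fᵅ₀₁/∂xᵅ`. -/
theorem pullback_symplecticity_compatibility
    (N : ℕ)
    (L : Fin 2 → Fin N → (Fin N → ℝ) → ℝ)
    (hL : ∀ α j, ContDiff ℝ 2 (L α j))
    (H : (Fin N → ℝ) → ℝ) (hH : ContDiff ℝ 2 H)
    (K : Fin 2 → Fin N → Fin N → (Fin N → ℝ) → ℝ)
    (hK : ∀ α i j v, K α i j v
      = fderiv ℝ (L α j) v (Pi.single i 1) - fderiv ℝ (L α i) v (Pi.single j 1))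
    (z : (Fin 2 → ℝ) → (Fin N → ℝ)) (hz : ContDiff ℝ 3 z)
    (Lt : (Fin 2 → ℝ) → ℝ)
    (hLt : ∀ q, Lt q
      = (∑ α : Fin 2, ∑ j : Fin N, L α j (z q) * fderiv ℝ z q (Pi.single α 1) j)
        - H (z q))
    (G : Fin 2 → (Fin 2 → ℝ) → ℝ)
    (hG : ∀ (β : Fin 2) (q : Fin 2 → ℝ), G β q
      = ∑ α : Fin 2,
          fderiv ℝ (fun q' =>
              (∑ j : Fin N, L α j (z q') * fderiv ℝ z q' (Pi.single β 1) j)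
                - (if α = β then Lt q' else 0)) q (Pi.single α 1))
    (F : Fin 2 → (Fin 2 → ℝ) → ℝ)
    (hF : ∀ (α : Fin 2) (q : Fin 2 → ℝ), F α q
      = ∑ i : Fin N, ∑ j : Fin N,
          K α i j (z q) * fderiv ℝ z q (Pi.single 0 1) i
            * fderiv ℝ z q (Pi.single 1 1) j) :
    ∀ q : Fin 2 → ℝ,
      fderiv ℝ (G 1) q (Pi.single 0 1) - fderiv ℝ (G 0) q (Pi.single 1 1)
        = ∑ α : Fin 2, fderiv ℝ (F α) q (Pi.single α 1) := by
  set A : Fin 2 → Fin 2 → (Fin 2 → ℝ) → ℝ := fun α β => oneFormPullback (L α) z (Pi.single β 1)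
  have hA : ∀ α β, ContDiff ℝ 2 (A α β) := fun α β => ContDiff.oneFormPullback (hL α) hz _
  have hLtA : Lt = fun p => A 0 0 p + A 1 1 p - H (z p) := by
    funext p
    rw [hLt, Fin.sum_univ_two]
    rfl
  have hLtC : ContDiff ℝ 2 Lt := by
    rw [hLtA]
    exact ((hA 0 0).add (hA 1 1)).sub (hH.comp (hz.of_le (by norm_num)))
  have hFA : F = fun α p =>
      fderiv ℝ (A α 1) p (Pi.single 0 1) - fderiv ℝ (A α 0) p (Pi.single 1 1) := by
    funext α p
    rw [hF, fderiv_oneFormPullback_sub (fun j => (hL α j).differentiable two_ne_zero _)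
      (hz.of_le (by norm_num))]
    simp only [hK]
  rw [hFA]
  exact curl_divergence_eq_divergence_curl hA hLtC (fun α => Pi.single α 1) hG 1 0
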